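/- Let Y be a real 3×3 matrix with trace zero, and let q₀, p₀ ∈ ℝ³ satisfy p₀ · q₀ = 1 and −Yᵀ p₀ = q₀ × (Y q₀). Then the curves q(t) := exp(tY) q₀ and p(t) := exp(−tYᵀ) p₀ satisfy p(t) · q(t) = 1 and p'(t) = q(t) × q'(t) for all t ∈ ℝ. -/

import Mathlib

/-!
For traceless `Y` the flow `exp (t • Y)` preserves the volume form `(u ⨯₃ v) ⬝ᵥ w`, whose
derivative along the flow is `Y.trace` times itself. By duality
`exp (t • Y) u ⨯₃ exp (t • Y) v = exp (-(t • Yᵀ)) (u ⨯₃ v)`, so with `u = q₀`, `v = Y q₀` the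
hypothesis turns `q ⨯₃ q'` into `exp (-(t • Yᵀ)) (-(Yᵀ p₀)) = p'`, while
`p ⬝ᵥ q = p₀ ⬝ᵥ exp (-(t • Y)) exp (t • Y) q₀ = 1`.
-/

open Matrix

theorem triple_product_derivation_eq_trace_mul {R : Type*} [CommRing R]
    (Y : Matrix (Fin 3) (Fin 3) R) (u v w : Fin 3 → R) :
    (Y *ᵥ u) ⨯₃ v ⬝ᵥ w + u ⨯₃ (Y *ᵥ v) ⬝ᵥ w + u ⨯₃ v ⬝ᵥ (Y *ᵥ w) =
      Y.trace * (u ⨯₃ v ⬝ᵥ w) := by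
  simp only [dotProduct, cross_apply, mulVec, Fin.sum_univ_three, cons_val_zero, cons_val_one,
    cons_val, trace, diag_apply]
  ring

theorem LinearMap.hasDerivAt_of_bilinear {𝕜 E F G : Type*} [NontriviallyNormedField 𝕜]
    [CompleteSpace 𝕜] [NormedAddCommGroup E] [NormedSpace 𝕜 E] [FiniteDimensional 𝕜 E]
    [NormedAddCommGroup F] [NormedSpace 𝕜 F] [FiniteDimensional 𝕜 F]
    [NormedAddCommGroup G] [NormedSpace 𝕜 G]
    (B : E →ₗ[𝕜] F →ₗ[𝕜] G) {u : 𝕜 → E} {v : 𝕜 → F} {u' : E} {v' : F} {t : 𝕜}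
    (hu : HasDerivAt u u' t) (hv : HasDerivAt v v' t) :
    HasDerivAt (fun s => B (u s) (v s)) (B (u t) v' + B u' (v t)) t :=
  B.toContinuousBilinearMap.hasDerivAt_of_bilinear (fun _ => hu) (fun _ => hv)

namespace Matrix

section Exp

variable {m : Type*} [Fintype m] [DecidableEq m]

theorem hasDerivAt_exp_smul_mulVec (Y : Matrix m m ℝ) (v : m → ℝ) (t : ℝ) :
    HasDerivAt (fun s : ℝ => NormedSpace.exp (s • Y) *ᵥ v)
      (NormedSpace.exp (t • Y) *ᵥ (Y *ᵥ v)) t := by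
  -- any matrix norm inducing the entrywise topology makes `hasDerivAt_exp_smul_const` available
  let _ := Matrix.linftyOpNormedRing (n := m) (α := ℝ)
  let _ := Matrix.linftyOpNormedAlgebra (n := m) (α := ℝ) (R := ℝ)
  let evalAt : Matrix m m ℝ →L[ℝ] m → ℝ :=
    (LinearMap.applyₗ v ∘ₗ (toLin' (R := ℝ)).toLinearMap).toContinuousLinearMap
  rw [mulVec_mulVec]
  exact evalAt.hasFDerivAt.comp_hasDerivAt t (hasDerivAt_exp_smul_const Y t)

theorem exp_smul_mulVec_comm (Y : Matrix m m ℝ) (v : m → ℝ) (t : ℝ) :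
    NormedSpace.exp (t • Y) *ᵥ (Y *ᵥ v) = Y *ᵥ (NormedSpace.exp (t • Y) *ᵥ v) := by
  rw [mulVec_mulVec, mulVec_mulVec, ((Commute.refl Y).smul_left t).exp_left.eq]

theorem exp_neg_mul_exp (A : Matrix m m ℝ) :
    NormedSpace.exp (-A) * NormedSpace.exp A = 1 := by
  rw [← exp_add_of_commute _ _ (Commute.refl A).neg_left, neg_add_cancel, NormedSpace.exp_zero]

theorem exp_mul_exp_neg (A : Matrix m m ℝ) :
    NormedSpace.exp A * NormedSpace.exp (-A) = 1 := by
  simpa using exp_neg_mul_exp (-A)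

theorem exp_neg_smul_transpose (Y : Matrix m m ℝ) (t : ℝ) :
    NormedSpace.exp (-(t • Yᵀ)) = (NormedSpace.exp (-(t • Y)))ᵀ := by
  rw [← exp_transpose, transpose_neg, transpose_smul]

theorem exp_neg_smul_transpose_mulVec_dotProduct (Y : Matrix m m ℝ) (p q : m → ℝ) (t : ℝ) :
    (NormedSpace.exp (-(t • Yᵀ)) *ᵥ p) ⬝ᵥ (NormedSpace.exp (t • Y) *ᵥ q) = p ⬝ᵥ q := by
  rw [exp_neg_smul_transpose, mulVec_transpose, ← dotProduct_mulVec, mulVec_mulVec,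
    exp_neg_mul_exp, one_mulVec]

end Exp

theorem triple_product_exp_smul_mulVec {Y : Matrix (Fin 3) (Fin 3) ℝ} (hY : Y.trace = 0)
    (u v w : Fin 3 → ℝ) (t : ℝ) :
    (NormedSpace.exp (t • Y) *ᵥ u) ⨯₃ (NormedSpace.exp (t • Y) *ᵥ v) ⬝ᵥ
      (NormedSpace.exp (t • Y) *ᵥ w) = u ⨯₃ v ⬝ᵥ w := by
  let volume : ℝ → ℝ := fun s =>
    (NormedSpace.exp (s • Y) *ᵥ u) ⨯₃ (NormedSpace.exp (s • Y) *ᵥ v) ⬝ᵥ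
      (NormedSpace.exp (s • Y) *ᵥ w)
  have hderiv : ∀ s, HasDerivAt volume 0 s := by
    intro s
    have hcross := crossProduct.hasDerivAt_of_bilinear (hasDerivAt_exp_smul_mulVec Y u s)
      (hasDerivAt_exp_smul_mulVec Y v s)
    refine ((dotProductBilin ℝ ℝ).hasDerivAt_of_bilinear hcross
      (hasDerivAt_exp_smul_mulVec Y w s)).congr_deriv ?_
    have htrace := triple_product_derivation_eq_trace_mul Y (NormedSpace.exp (s • Y) *ᵥ u)
      (NormedSpace.exp (s • Y) *ᵥ v) (NormedSpace.exp (s • Y) *ᵥ w)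
    simp only [dotProductBilin_apply_apply, exp_smul_mulVec_comm, add_dotProduct, hY,
      zero_mul] at htrace ⊢
    linear_combination htrace
  simpa [volume] using is_const_of_deriv_eq_zero (fun s => (hderiv s).differentiableAt)
    (fun s => (hderiv s).deriv) t 0

theorem exp_smul_mulVec_cross {Y : Matrix (Fin 3) (Fin 3) ℝ} (hY : Y.trace = 0)
    (u v : Fin 3 → ℝ) (t : ℝ) :
    (NormedSpace.exp (t • Y) *ᵥ u) ⨯₃ (NormedSpace.exp (t • Y) *ᵥ v) =
      NormedSpace.exp (-(t • Yᵀ)) *ᵥ (u ⨯₃ v) := by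
  refine dotProduct_eq _ _ fun w => ?_
  calc (NormedSpace.exp (t • Y) *ᵥ u) ⨯₃ (NormedSpace.exp (t • Y) *ᵥ v) ⬝ᵥ w
      = (NormedSpace.exp (t • Y) *ᵥ u) ⨯₃ (NormedSpace.exp (t • Y) *ᵥ v) ⬝ᵥ
          (NormedSpace.exp (t • Y) *ᵥ (NormedSpace.exp (-(t • Y)) *ᵥ w)) := by
        rw [mulVec_mulVec, exp_mul_exp_neg, one_mulVec]
    _ = u ⨯₃ v ⬝ᵥ (NormedSpace.exp (-(t • Y)) *ᵥ w) := triple_product_exp_smul_mulVec hY u v _ t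
    _ = NormedSpace.exp (-(t • Yᵀ)) *ᵥ (u ⨯₃ v) ⬝ᵥ w := by
        rw [exp_neg_smul_transpose, mulVec_transpose, dotProduct_mulVec]

end Matrix

theorem one_parameter_orbit_integral_curve (Y : Matrix (Fin 3) (Fin 3) ℝ)
    (hY : Y.trace = 0) (q₀ p₀ : Fin 3 → ℝ)
    (h1 : p₀ ⬝ᵥ q₀ = 1)
    (h2 : -(Y.transpose *ᵥ p₀) = q₀ ⨯₃ (Y *ᵥ q₀)) :
    ∀ t : ℝ,
      (NormedSpace.exp (-(t • Y.transpose)) *ᵥ p₀) ⬝ᵥ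
          (NormedSpace.exp (t • Y) *ᵥ q₀) = 1 ∧
      deriv (fun s : ℝ => NormedSpace.exp (-(s • Y.transpose)) *ᵥ p₀) t
        = (NormedSpace.exp (t • Y) *ᵥ q₀) ⨯₃
            deriv (fun s : ℝ => NormedSpace.exp (s • Y) *ᵥ q₀) t := by
  intro t
  refine ⟨(exp_neg_smul_transpose_mulVec_dotProduct Y p₀ q₀ t).trans h1, ?_⟩
  have hp := hasDerivAt_exp_smul_mulVec (-Yᵀ) p₀ t
  simp only [smul_neg, neg_mulVec, h2] at hp
  rw [hp.deriv, (hasDerivAt_exp_smul_mulVec Y q₀ t).deriv, exp_smul_mulVec_cross hY]
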